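/- arXiv:2304.00392 — 2 statements merged into one kernel-verified Lean document; each statement's English description precedes it below -/
import Mathlib

section
/- Let h(y|x) be a likelihood function with 0 < c ≤ h(y|x) ≤ C < ∞ for all x (for fixed y). Then the Bayes operator B_y π = h(y|·)π(·)/∫ h(y|x)π(dx) satisfies ‖B_y μ − B_y ν‖_{TV} ≤ (2C/c) ‖μ − ν‖_{TV} for all probability measures μ, ν. -/
open MeasureTheory

/-- Total variation distance: sup over measurable sets of |μ(A) − ν(A)|. -/
noncomputable def tvDist {n : ℕ} (μ ν : Measure (EuclideanSpace ℝ (Fin n))) : ℝ :=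
  ⨆ s : {s : Set (EuclideanSpace ℝ (Fin n)) // MeasurableSet s},
    |(μ s.1).toReal - (ν s.1).toReal|

/-- The Bayes (conditioning) operator: reweight `π` by the likelihood `ℓ` and normalize. -/
noncomputable def bayes {n : ℕ} (ℓ : EuclideanSpace ℝ (Fin n) → ℝ)
    (π : Measure (EuclideanSpace ℝ (Fin n))) : Measure (EuclideanSpace ℝ (Fin n)) :=
  (∫⁻ x, ENNReal.ofReal (ℓ x) ∂π)⁻¹ • π.withDensity (fun x => ENNReal.ofReal (ℓ x))

/-!
The posterior mass of `A` is `∫_A ℓ dπ / ∫ ℓ dπ`. Along a Hahn decomposition `s` of `μ - ν`,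
the integrals of a measurable `0 ≤ f ≤ C` against `μ` and `ν` differ by at most
`C (μ s - ν s) ≤ C ‖μ - ν‖_TV`. Applying this to the numerators and to the normalizers (which are
at least `c`), `|a/p - b/q| ≤ |a - b|/p + (b/q) |p - q|/p` with `b ≤ q` gives the constant `2C/c`.
-/

section BoundedIntegrand

variable {α : Type*} [MeasurableSpace α]

lemma restrict_le_restrict_of_forall_subset_le {μ ν : Measure α} {s : Set α} (hs : MeasurableSet s)
    (h : ∀ t, MeasurableSet t → t ⊆ s → μ t ≤ ν t) : μ.restrict s ≤ ν.restrict s :=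
  Measure.le_iff.mpr fun t ht => by
    rw [Measure.restrict_apply ht, Measure.restrict_apply ht]
    exact h _ (ht.inter hs) Set.inter_subset_right

variable {μ ν : Measure α} [IsFiniteMeasure μ] [IsFiniteMeasure ν] {f : α → ℝ} {C : ℝ}

lemma integrable_of_forall_nonneg_of_le (hf : Measurable f) (hf0 : ∀ x, 0 ≤ f x)
    (hfC : ∀ x, f x ≤ C) : Integrable f μ :=
  .of_bound hf.aestronglyMeasurable C
    (ae_of_all _ fun x => (Real.norm_of_nonneg (hf0 x)).trans_le (hfC x))

lemma integral_sub_integral_le_of_restrict_le (hf : Measurable f) (hf0 : ∀ x, 0 ≤ f x)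
    (hfC : ∀ x, f x ≤ C) {s : Set α} (hs : MeasurableSet s)
    (hνμ : ν.restrict s ≤ μ.restrict s) (hμν : μ.restrict sᶜ ≤ ν.restrict sᶜ) :
    ∫ x, f x ∂μ - ∫ x, f x ∂ν ≤ C * (μ.real s - ν.real s) := by
  have hint : ∀ ρ : Measure α, [IsFiniteMeasure ρ] → Integrable f ρ := fun _ _ =>
    integrable_of_forall_nonneg_of_le hf hf0 hfC
  have on_s : ∫ x in s, (C - f x) ∂ν ≤ ∫ x in s, (C - f x) ∂μ :=
    integral_mono_measure hνμ (ae_of_all _ fun x => sub_nonneg.mpr (hfC x))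
      ((integrable_const C).sub (hint _))
  have on_compl : ∫ x in sᶜ, f x ∂μ ≤ ∫ x in sᶜ, f x ∂ν :=
    integral_mono_measure hμν (ae_of_all _ hf0) (hint _)
  rw [integral_sub (integrable_const C) (hint _), integral_sub (integrable_const C) (hint _),
    setIntegral_const, setIntegral_const, smul_eq_mul, smul_eq_mul] at on_s
  rw [← integral_add_compl hs (hint μ), ← integral_add_compl hs (hint ν)]
  linarith

lemma integral_sub_integral_le_mul (hf : Measurable f) (hf0 : ∀ x, 0 ≤ f x)
    (hfC : ∀ x, f x ≤ C) (hC : 0 ≤ C) {t : ℝ}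
    (ht : ∀ A, MeasurableSet A → μ.real A - ν.real A ≤ t) :
    ∫ x, f x ∂μ - ∫ x, f x ∂ν ≤ C * t := by
  obtain ⟨s, hs, hνμ, hμν⟩ := hahn_decomposition μ ν
  calc ∫ x, f x ∂μ - ∫ x, f x ∂ν
      ≤ C * (μ.real s - ν.real s) := integral_sub_integral_le_of_restrict_le hf hf0 hfC hs
        (restrict_le_restrict_of_forall_subset_le hs hνμ)
        (restrict_le_restrict_of_forall_subset_le hs.compl hμν)
    _ ≤ C * t := mul_le_mul_of_nonneg_left (ht s hs) hC

lemma abs_integral_sub_integral_le_mul (hf : Measurable f) (hf0 : ∀ x, 0 ≤ f x)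
    (hfC : ∀ x, f x ≤ C) (hC : 0 ≤ C) {t : ℝ}
    (ht : ∀ A, MeasurableSet A → |μ.real A - ν.real A| ≤ t) :
    |∫ x, f x ∂μ - ∫ x, f x ∂ν| ≤ C * t :=
  abs_sub_le_iff.mpr
    ⟨integral_sub_integral_le_mul hf hf0 hfC hC fun A hA => (le_abs_self _).trans (ht A hA),
      integral_sub_integral_le_mul hf hf0 hfC hC fun A hA =>
        (le_abs_self _).trans ((abs_sub_comm _ _).trans_le (ht A hA))⟩

end BoundedIntegrand

lemma abs_div_sub_div_le {a b p q c K : ℝ} (hc : 0 < c) (hcp : c ≤ p) (hq : 0 < q)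
    (hb : 0 ≤ b) (hbq : b ≤ q) (hab : |a - b| ≤ K) (hpq : |p - q| ≤ K) :
    |a / p - b / q| ≤ 2 * K / c := by
  have hp : 0 < p := hc.trans_le hcp
  have hK : 0 ≤ K := (abs_nonneg _).trans hab
  have hbq' : |b / q| ≤ 1 := by
    rw [abs_of_nonneg (div_nonneg hb hq.le)]; exact div_le_one_of_le₀ hbq hq.le
  calc |a / p - b / q| = |(a - b) / p + b / q * ((q - p) / p)| := by
        congr 1; field_simp; ring
    _ ≤ |(a - b) / p| + |b / q * ((q - p) / p)| := abs_add_le _ _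
    _ = |a - b| / p + |b / q| * (|p - q| / p) := by
        rw [abs_mul, abs_div (a - b), abs_div (q - p), abs_of_pos hp, abs_sub_comm q p]
    _ ≤ K / c + 1 * (K / c) := by gcongr
    _ = 2 * K / c := by ring

section Bayes

variable {n : ℕ}

local notation "E" => EuclideanSpace ℝ (Fin n)

lemma abs_measureReal_sub_le_tvDist (μ ν : Measure E) [IsFiniteMeasure μ] [IsFiniteMeasure ν]
    {A : Set E} (hA : MeasurableSet A) : |μ.real A - ν.real A| ≤ tvDist μ ν := by
  refine le_ciSup (f := fun s : {s : Set E // MeasurableSet s} => |μ.real s.1 - ν.real s.1|)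
    ⟨μ.real .univ + ν.real .univ, ?_⟩ ⟨A, hA⟩
  rintro _ ⟨s, rfl⟩
  have hμ := measureReal_mono (μ := μ) (Set.subset_univ s.1)
  have hν := measureReal_mono (μ := ν) (Set.subset_univ s.1)
  have := measureReal_nonneg (μ := μ) (s := s.1)
  have := measureReal_nonneg (μ := ν) (s := s.1)
  exact abs_sub_le_iff.mpr ⟨by linarith, by linarith⟩

lemma abs_setIntegral_sub_le_mul_tvDist {f : E → ℝ} {C : ℝ} (hf : Measurable f)
    (hf0 : ∀ x, 0 ≤ f x) (hfC : ∀ x, f x ≤ C) (hC : 0 ≤ C)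
    (μ ν : Measure E) [IsFiniteMeasure μ] [IsFiniteMeasure ν] {B : Set E} (hB : MeasurableSet B) :
    |∫ x in B, f x ∂μ - ∫ x in B, f x ∂ν| ≤ C * tvDist μ ν :=
  abs_integral_sub_integral_le_mul hf hf0 hfC hC fun A hA => by
    rw [measureReal_restrict_apply hA, measureReal_restrict_apply hA]
    exact abs_measureReal_sub_le_tvDist μ ν (hA.inter hB)

lemma bayes_real_apply {ℓ : E → ℝ} (hℓ : Measurable ℓ) (hℓ0 : ∀ x, 0 ≤ ℓ x) (π : Measure E)
    {A : Set E} (hA : MeasurableSet A) :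
    (bayes ℓ π).real A = (∫ x in A, ℓ x ∂π) / ∫ x, ℓ x ∂π := by
  rw [integral_eq_lintegral_of_nonneg_ae (ae_of_all _ hℓ0) hℓ.aestronglyMeasurable,
    integral_eq_lintegral_of_nonneg_ae (ae_of_all _ hℓ0) hℓ.aestronglyMeasurable,
    Measure.real, bayes, Measure.smul_apply, withDensity_apply _ hA, smul_eq_mul,
    ENNReal.toReal_mul, ENNReal.toReal_inv, div_eq_inv_mul]

end Bayes

theorem stmt9 {n : ℕ} (ℓ : EuclideanSpace ℝ (Fin n) → ℝ) (hℓ : Measurable ℓ)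
    (c C : ℝ) (hc : 0 < c)
    (hbound : ∀ x, c ≤ ℓ x ∧ ℓ x ≤ C) :
    ∀ μ ν : Measure (EuclideanSpace ℝ (Fin n)),
      IsProbabilityMeasure μ → IsProbabilityMeasure ν →
      tvDist (bayes ℓ μ) (bayes ℓ ν) ≤ (2 * C / c) * tvDist μ ν := by
  intro μ ν _ _
  have hℓ0 : ∀ x, 0 ≤ ℓ x := fun x => hc.le.trans (hbound x).1
  have hC : 0 ≤ C := (hℓ0 0).trans (hbound 0).2
  have hℓC : ∀ x, ℓ x ≤ C := fun x => (hbound x).2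
  have hint : ∀ π : Measure (EuclideanSpace ℝ (Fin n)), [IsFiniteMeasure π] → Integrable ℓ π :=
    fun _ _ => integrable_of_forall_nonneg_of_le hℓ hℓ0 hℓC
  have hnormalizer : ∀ π : Measure (EuclideanSpace ℝ (Fin n)), [IsProbabilityMeasure π] →
      c ≤ ∫ x, ℓ x ∂π := fun π _ => by
    simpa using integral_mono (integrable_const c) (hint π) fun x => (hbound x).1
  refine ciSup_le fun ⟨A, hA⟩ => ?_
  change |(bayes ℓ μ).real A - (bayes ℓ ν).real A| ≤ _
  rw [bayes_real_apply hℓ hℓ0 μ hA, bayes_real_apply hℓ hℓ0 ν hA]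
  calc _ ≤ 2 * (C * tvDist μ ν) / c :=
        abs_div_sub_div_le hc (hnormalizer μ) (hc.trans_le (hnormalizer ν))
          (setIntegral_nonneg hA fun x _ => hℓ0 x)
          (setIntegral_le_integral (hint ν) (ae_of_all _ hℓ0))
          (abs_setIntegral_sub_le_mul_tvDist hℓ hℓ0 hℓC hC μ ν hA)
          (by simpa using abs_setIntegral_sub_le_mul_tvDist hℓ hℓ0 hℓC hC μ ν .univ)
    _ = 2 * C / c * tvDist μ ν := by ring
end

section
/- Let π be a probability measure on ℝⁿ, h(y|x) a likelihood, and for each y let T_y be a map with T_y#π = B_y π, where B_y π = h(y|·)π / ∫h(y|x)dπ(x) is the Bayes update. If X ~ π and Y ~ ∫ h(·|x) dπ(x) (the marginal of Y), and X̄ ~ π is independent of (X,Y), then the pair (T_Y(X̄), Y) has the same joint distribution as (X, Y). -/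
/-!
Write `μ` for the joint law of `(X, Y)`. Disintegrating the law of `(Y, X)` against the marginal
`ν` of `Y` gives `ν ⊗ₘ B`, with `B y` the posterior. Drawing `Y ∼ ν` and independently `X̄ ∼ π`
and then moving `X̄` by `T_Y` samples `ν ⊗ₘ (y ↦ T_y#π)`, which is `ν ⊗ₘ B` because the two
kernels agree `ν`-a.e.; swapping the coordinates back gives `μ`.
-/

open MeasureTheory ProbabilityTheory

namespace MeasureTheory.Measure

variable {α β γ : Type*} [MeasurableSpace α] [MeasurableSpace β] [MeasurableSpace γ]

theorem map_prod_prodMk_eq_compProd {ν : Measure β} [SFinite ν] {π : Measure α} [SFinite π]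
    {κ : Kernel β γ} [IsSFiniteKernel κ] {T : β → α → γ}
    (hT : Measurable fun q : β × α => T q.1 q.2) (hκ : ∀ᵐ y ∂ν, π.map (T y) = κ y) :
    (ν.prod π).map (fun q => (q.1, T q.1 q.2)) = ν ⊗ₘ κ := by
  have hg : Measurable fun q : β × α => (q.1, T q.1 q.2) := measurable_fst.prodMk hT
  ext s hs
  rw [map_apply hg hs, compProd_apply hs, prod_apply (hg hs)]
  refine lintegral_congr_ae ?_
  filter_upwards [hκ] with y hy
  have hTy : Measurable (T y) := hT.comp measurable_prodMk_left
  rw [← hy, map_apply hTy (measurable_prodMk_left hs)]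
  rfl

theorem map_prod_snd_eq_of_map_eq_condKernel [StandardBorelSpace α] [Nonempty α]
    {μ : Measure (α × β)} [IsFiniteMeasure μ] {π : Measure α} [SFinite π] {T : β → α → α}
    (hT : Measurable fun q : β × α => T q.1 q.2)
    (hpush : ∀ᵐ y ∂μ.snd, π.map (T y) = (μ.map Prod.swap).condKernel y) :
    (π.prod μ.snd).map (fun p => (T p.2 p.1, p.2)) = μ := by
  have hf : Measurable fun p : α × β => (T p.2 p.1, p.2) :=
    (hT.comp measurable_swap).prodMk measurable_snd
  have hg : Measurable fun q : β × α => (q.1, T q.1 q.2) := measurable_fst.prodMk hT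
  calc (π.prod μ.snd).map (fun p => (T p.2 p.1, p.2))
      = ((μ.snd.prod π).map fun q => (q.1, T q.1 q.2)).map Prod.swap := by
        rw [← prod_swap, map_map hf measurable_swap, map_map measurable_swap hg]
        rfl
    _ = ((μ.map Prod.swap).fst ⊗ₘ (μ.map Prod.swap).condKernel).map Prod.swap := by
        rw [map_prod_prodMk_eq_compProd hT hpush, fst_map_swap]
    _ = μ := by
        rw [disintegrate, map_map measurable_swap measurable_swap, Prod.swap_swap_eq, map_id]

end MeasureTheory.Measure

theorem stmt17 {n m : ℕ}
    (π : Measure (EuclideanSpace ℝ (Fin n))) [IsProbabilityMeasure π]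
    -- the likelihood, as a Markov kernel `x ↦ h(·|x)`
    (k : Kernel (EuclideanSpace ℝ (Fin n)) (EuclideanSpace ℝ (Fin m)))
    [IsMarkovKernel k]
    (T : EuclideanSpace ℝ (Fin m) → EuclideanSpace ℝ (Fin n) → EuclideanSpace ℝ (Fin n))
    (hT : Measurable fun p : EuclideanSpace ℝ (Fin m) × EuclideanSpace ℝ (Fin n) => T p.1 p.2)
    -- `T_y` pushes the prior `π` to the posterior `B_y π`, i.e. the conditional law of
    -- `X` given `Y = y`, for a.e. `y` under the marginal law of `Y`
    (hpush : ∀ᵐ y ∂((π ⊗ₘ k).snd),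
      π.map (T y) = ((π ⊗ₘ k).map Prod.swap).condKernel y) :
    -- `(T_Y(X̄), Y)`, with `X̄ ∼ π` independent of `(X, Y)`, has the law of `(X, Y)`
    (π.prod ((π ⊗ₘ k).snd)).map
        (fun p : EuclideanSpace ℝ (Fin n) × EuclideanSpace ℝ (Fin m) => (T p.2 p.1, p.2))
      = π ⊗ₘ k :=
  Measure.map_prod_snd_eq_of_map_eq_condKernel hT hpush
end
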